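/- (D'Auria) For every λ > 0 and every β > 0, setting s = λ + β√λ, the extended Erlang C formula satisfies C(s, λ) ≥ g(β), where g(β) = (1 + β·Φ(β)/φ(β))^{−1} is the Halfin–Whitt delay function. -/

import Mathlib

open MeasureTheory

/-- Standard normal probability density function. -/
noncomputable def stdGaussianPDF (x : ℝ) : ℝ :=
  Real.exp (-x ^ 2 / 2) / Real.sqrt (2 * Real.pi)

/-- Standard normal cumulative distribution function. -/
noncomputable def stdGaussianCDF (x : ℝ) : ℝ :=
  ∫ t in Set.Iic x, stdGaussianPDF t

/-- The Erlang C formula, extended to non-integer `s` via the Jagers–van Doorn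
integral representation `C(s,λ)⁻¹ = λ ∫_0^∞ t e^{−λt} (1+t)^{s−1} dt`. -/
noncomputable def erlangCExt (s lam : ℝ) : ℝ :=
  (lam * ∫ t in Set.Ioi (0 : ℝ), t * Real.exp (-lam * t) * (1 + t) ^ (s - 1))⁻¹

/-- The Halfin–Whitt delay function. -/
noncomputable def halfinWhittG (β : ℝ) : ℝ :=
  (1 + β * stdGaussianCDF β / stdGaussianPDF β)⁻¹

/-!
Integrating by parts, `C(s, λ)⁻¹ = 1 + (s - λ) ∫₀^∞ e^{-λt} (1 + t)^{s-1} dt`. Since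
`t ≥ L + L² / 2` for `L = log (1 + t)`, the integrand is at most `e^{-λL²/2 + (s-λ)L} / (1 + t)`,
and the substitution `x = log (1 + t)` bounds the integral by `∫₀^∞ e^{-λx²/2 + β√λ x} dx`, which
the affine substitution `y = √λ x - β` identifies with `Φ(β) / (√λ φ(β))`.
-/

open Real Set Filter Topology

section ChangeOfVariables

variable {E : Type*} [NormedAddCommGroup E] [NormedSpace ℝ E]

theorem integral_comp_add_right_Ioi (f : ℝ → E) (a c : ℝ) :
    ∫ x in Ioi a, f (x + c) = ∫ x in Ioi (a + c), f x := by
  have := (Homeomorph.addRight c).isClosedEmbedding.measurableEmbedding.setIntegral_map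
    (μ := volume) f (Ioi (a + c))
  rw [Homeomorph.coe_addRight, map_add_right_eq_self] at this
  rw [this, preimage_add_const_Ioi, add_sub_cancel_right]

theorem image_exp_sub_one_Ioi_zero : (fun x => exp x - 1) '' Ioi 0 = Ioi 0 := by
  rw [← image_image (· - 1 : ℝ → ℝ) exp, image_exp_Ioi, image_sub_const_Ioi, exp_zero, sub_self]

theorem integral_comp_log_one_add_Ioi (g : ℝ → E) :
    ∫ t in Ioi (0 : ℝ), (1 + t)⁻¹ • g (log (1 + t)) = ∫ x in Ioi 0, g x := by
  conv_lhs => rw [← image_exp_sub_one_Ioi_zero, integral_image_eq_integral_abs_deriv_smul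
    measurableSet_Ioi (fun x _ => ((hasDerivAt_exp x).sub_const 1).hasDerivWithinAt)
    (fun x _ y _ h => exp_injective (sub_left_injective h))]
  refine setIntegral_congr_fun measurableSet_Ioi fun x _ => ?_
  simp [abs_of_pos (exp_pos x), smul_smul, (exp_pos x).ne']

theorem integrableOn_comp_log_one_add_Ioi (g : ℝ → E) :
    IntegrableOn (fun t : ℝ => (1 + t)⁻¹ • g (log (1 + t))) (Ioi 0) ↔ IntegrableOn g (Ioi 0) := by
  conv_lhs => rw [← image_exp_sub_one_Ioi_zero,
    integrableOn_image_iff_integrableOn_abs_deriv_smul measurableSet_Ioi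
      (fun x _ => ((hasDerivAt_exp x).sub_const 1).hasDerivWithinAt)
      (fun x _ y _ h => exp_injective (sub_left_injective h))]
  refine integrableOn_congr_fun (fun x _ => ?_) measurableSet_Ioi
  simp [abs_of_pos (exp_pos x), smul_smul, (exp_pos x).ne']

end ChangeOfVariables

theorem stdGaussianCDF_div_stdGaussianPDF (β : ℝ) :
    stdGaussianCDF β / stdGaussianPDF β = exp (β ^ 2 / 2) * ∫ y in Iic β, exp (-y ^ 2 / 2) := by
  have hpi : sqrt (2 * π) ≠ 0 := by positivity
  simp only [stdGaussianCDF, stdGaussianPDF]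
  rw [integral_div, div_div_div_cancel_right₀ hpi, div_eq_mul_inv,
    ← exp_neg, mul_comm]
  ring_nf

theorem integrable_exp_neg_mul_sq_add_mul {c : ℝ} (hc : 0 < c) (b : ℝ) :
    Integrable fun x => exp (-c * x ^ 2 / 2 + b * x) := by
  refine (((integrable_exp_neg_mul_sq (half_pos hc)).comp_sub_right (b / c)).const_mul
    (exp (b ^ 2 / (2 * c)))).congr (.of_forall fun x => ?_)
  simp only [← exp_add]
  congr 1
  field_simp
  ring

theorem sqrt_mul_integral_exp_neg_mul_sq_add_mul {lam : ℝ} (hlam : 0 < lam) (β : ℝ) :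
    √lam * ∫ x in Ioi 0, exp (-lam * x ^ 2 / 2 + β * √lam * x) =
      stdGaussianCDF β / stdGaussianPDF β := by
  have hsq : √lam ^ 2 = lam := sq_sqrt hlam.le
  let f : ℝ → ℝ := fun y => exp (-y ^ 2 / 2)
  calc √lam * ∫ x in Ioi 0, exp (-lam * x ^ 2 / 2 + β * √lam * x)
      = exp (β ^ 2 / 2) * (√lam * ∫ x in Ioi 0, f (√lam * x + -β)) := by
        rw [← integral_const_mul, ← integral_const_mul, ← integral_const_mul]
        refine setIntegral_congr_fun measurableSet_Ioi fun x _ => ?_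
        have hexp : -lam * x ^ 2 / 2 + β * √lam * x = β ^ 2 / 2 + -(√lam * x + -β) ^ 2 / 2 := by
          linear_combination (x ^ 2 / 2) * hsq
        rw [hexp, exp_add]
        ring
    _ = exp (β ^ 2 / 2) * ∫ y in Ioi (-β), f y := by
        rw [← smul_eq_mul (a := √lam), integral_comp_mul_left_Ioi' (fun y => f (y + -β)) 0
          (sqrt_pos.2 hlam), mul_zero, integral_comp_add_right_Ioi, zero_add]
    _ = stdGaussianCDF β / stdGaussianPDF β := by
        rw [← integral_comp_neg_Iic, stdGaussianCDF_div_stdGaussianPDF]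
        simp only [f, neg_sq]

section ErlangIntegrals

variable {c : ℝ}

theorem tendsto_one_add_rpow_mul_exp_neg_mul_atTop_nhds_zero (p : ℝ) (hc : 0 < c) :
    Tendsto (fun t => (1 + t) ^ p * exp (-c * t)) atTop (𝓝 0) := by
  have h := ((tendsto_rpow_mul_exp_neg_mul_atTop_nhds_zero p c hc).comp
    (tendsto_atTop_add_const_left _ 1 tendsto_id)).mul_const (exp c)
  rw [zero_mul] at h
  refine h.congr fun t => ?_
  simp only [Function.comp_apply, id, mul_assoc, ← exp_add]
  ring_nf

theorem integrableOn_exp_neg_mul_mul_one_add_rpow (p : ℝ) (hc : 0 < c) :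
    IntegrableOn (fun t => exp (-c * t) * (1 + t) ^ p) (Ioi 0) := by
  refine integrable_of_isBigO_exp_neg (half_pos hc) ?_ ?_
  · exact ContinuousOn.mul (by fun_prop)
      (ContinuousOn.rpow_const (by fun_prop) fun t (ht : 0 ≤ t) => Or.inl (by positivity))
  -- `e^{-ct} (1 + t)^p = ((1 + t)^p e^{-ct/2}) e^{-ct/2}`, and the first factor tends to zero
  have hbound := (tendsto_one_add_rpow_mul_exp_neg_mul_atTop_nhds_zero p
    (half_pos hc)).isBigO_one ℝ
  refine (hbound.mul (Asymptotics.isBigO_refl (fun t => exp (-(c / 2) * t)) atTop)).congr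
    (fun t => ?_) fun t => one_mul _
  rw [mul_assoc, ← exp_add, mul_comm]
  ring_nf

theorem integrableOn_mul_exp_neg_mul_mul_one_add_rpow (p : ℝ) (hc : 0 < c) :
    IntegrableOn (fun t => t * exp (-c * t) * (1 + t) ^ p) (Ioi 0) := by
  refine (integrableOn_exp_neg_mul_mul_one_add_rpow (p + 1) hc).mono' ?_ ?_
  · fun_prop
  · refine (ae_restrict_iff' measurableSet_Ioi).2 (.of_forall fun t (ht : 0 < t) => ?_)
    have h1t : 0 < 1 + t := by linarith
    rw [norm_of_nonneg (by positivity), rpow_add_one h1t.ne']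
    have : 0 ≤ exp (-c * t) * (1 + t) ^ p := by positivity
    nlinarith

end ErlangIntegrals

theorem inv_erlangCExt {lam : ℝ} (hlam : 0 < lam) (s : ℝ) :
    (erlangCExt s lam)⁻¹ = 1 + (s - lam) * ∫ t in Ioi 0, exp (-lam * t) * (1 + t) ^ (s - 1) := by
  rw [erlangCExt, inv_inv]
  set F : ℝ → ℝ := fun t => -(exp (-lam * t) * (1 + t) ^ s)
  have hderiv : ∀ t ∈ Ici (0 : ℝ), HasDerivAt F (lam * (t * exp (-lam * t) * (1 + t) ^ (s - 1))
      - (s - lam) * (exp (-lam * t) * (1 + t) ^ (s - 1))) t := by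
    intro t (ht : 0 ≤ t)
    have h1t : 0 < 1 + t := by linarith
    have h := ((((hasDerivAt_id t).const_mul (-lam)).exp).mul
      (((hasDerivAt_id t).const_add 1).rpow_const (p := s) (Or.inl h1t.ne'))).neg
    refine (show HasDerivAt F _ t from h).congr_deriv ?_
    simp only [id, rpow_sub_one h1t.ne']
    field_simp
    ring
  have htendsto : Tendsto F atTop (𝓝 0) := by
    simpa [F, mul_comm] using
      (tendsto_one_add_rpow_mul_exp_neg_mul_atTop_nhds_zero s hlam).neg
  have hK := integrableOn_mul_exp_neg_mul_mul_one_add_rpow (s - 1) hlam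
  have hJ := integrableOn_exp_neg_mul_mul_one_add_rpow (s - 1) hlam
  have hFTC := integral_Ioi_of_hasDerivAt_of_tendsto' hderiv
    ((hK.const_mul lam).sub (hJ.const_mul (s - lam))) htendsto
  rw [integral_sub (hK.const_mul lam) (hJ.const_mul (s - lam)), integral_const_mul,
    integral_const_mul] at hFTC
  simp only [F, mul_zero, exp_zero, add_zero, one_rpow, mul_one] at hFTC
  linarith

theorem log_one_add_add_sq_div_two_le {t : ℝ} (ht : 0 ≤ t) :
    log (1 + t) + log (1 + t) ^ 2 / 2 ≤ t := by
  have h := quadratic_le_exp_of_nonneg (log_nonneg (le_add_of_nonneg_right ht))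
  rw [exp_log (by linarith)] at h
  linarith

theorem exp_neg_mul_mul_one_add_rpow_le {lam t : ℝ} (hlam : 0 ≤ lam) (ht : 0 ≤ t) (b : ℝ) :
    exp (-lam * t) * (1 + t) ^ (lam + b - 1) ≤
      (1 + t)⁻¹ * exp (-lam * log (1 + t) ^ 2 / 2 + b * log (1 + t)) := by
  have h1t : 0 < 1 + t := by linarith
  have hlog := mul_le_mul_of_nonneg_left (log_one_add_add_sq_div_two_le ht) hlam
  rw [rpow_def_of_pos h1t, ← exp_log (inv_pos.2 h1t), log_inv, ← exp_add, ← exp_add]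
  exact exp_le_exp.2 (by linarith)

theorem integral_exp_neg_mul_mul_one_add_rpow_le {lam : ℝ} (hlam : 0 < lam) (b : ℝ) :
    ∫ t in Ioi 0, exp (-lam * t) * (1 + t) ^ (lam + b - 1) ≤
      ∫ x in Ioi 0, exp (-lam * x ^ 2 / 2 + b * x) := by
  rw [← integral_comp_log_one_add_Ioi fun x => exp (-lam * x ^ 2 / 2 + b * x)]
  have hG := (integrable_exp_neg_mul_sq_add_mul hlam b).integrableOn (s := Ioi 0)
  refine setIntegral_mono_on (integrableOn_exp_neg_mul_mul_one_add_rpow _ hlam)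
    ((integrableOn_comp_log_one_add_Ioi _).2 hG) measurableSet_Ioi
    fun t ht => exp_neg_mul_mul_one_add_rpow_le hlam.le (le_of_lt ht) b

/-- D'Auria's bound: the Erlang C delay probability under the square-root rule
`s = λ + β√λ` is at least the Halfin–Whitt limit `g(β)`. -/
theorem erlangCExt_ge_halfinWhittG (lam β : ℝ) (hlam : 0 < lam) (hβ : 0 < β) :
    halfinWhittG β ≤ erlangCExt (lam + β * Real.sqrt lam) lam := by
  have hinv : (erlangCExt (lam + β * √lam) lam)⁻¹ ≤ (halfinWhittG β)⁻¹ := by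
    rw [inv_erlangCExt hlam, halfinWhittG, inv_inv, add_sub_cancel_left, mul_div_assoc,
      ← sqrt_mul_integral_exp_neg_mul_sq_add_mul hlam β, ← mul_assoc]
    gcongr 1 + _ * ?_
    exact integral_exp_neg_mul_mul_one_add_rpow_le hlam _
  have hpos : 0 < (erlangCExt (lam + β * √lam) lam)⁻¹ := by
    rw [inv_erlangCExt hlam, add_sub_cancel_left]
    exact add_pos_of_pos_of_nonneg one_pos (mul_nonneg (by positivity)
      (setIntegral_nonneg measurableSet_Ioi fun t (ht : 0 < t) => by positivity))
  simpa using inv_anti₀ hpos hinv
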